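/- arXiv:1802.09199 — 3 statements merged into one kernel-verified Lean document; each statement's English description precedes it below -/
import Mathlib

section
/- Let (Alo, Ahi) be an interval m×n matrix, (blo, bhi) an interval vector in ℝ^m, and (𝒜, β) a quantifier pattern. For every x ∈ ℝ^n: x is an AE-solution of the interval-quantifier system of inequalities A x ≤ b (all rows are '≤') if and only if for every row i one has U_i(x) ≤ s_i. -/
open Finset

/-- A real matrix `A` lies in the interval matrix `(Alo, Ahi)`. -/
def memIM {m n : ℕ} (Alo Ahi A : Matrix (Fin m) (Fin n) ℝ) : Prop :=
  ∀ i j, Alo i j ≤ A i j ∧ A i j ≤ Ahi i j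

/-- A real vector `b` lies in the interval vector `(blo, bhi)`. -/
def memIV {m : ℕ} (blo bhi b : Fin m → ℝ) : Prop :=
  ∀ i, blo i ≤ b i ∧ b i ≤ bhi i

/-- `x` is an AE-solution of the interval-quantifier system `A x rel b`.
The quantifier pattern is given by `qA : Fin m → Fin n → Bool` and
`qb : Fin m → Bool`, where `true` stands for the label "∀" and `false`
for the label "∃". -/
def AESol {m n : ℕ} (Alo Ahi : Matrix (Fin m) (Fin n) ℝ) (blo bhi : Fin m → ℝ)
    (qA : Fin m → Fin n → Bool) (qb : Fin m → Bool)
    (rel : Fin m → ℝ → ℝ → Prop) (x : Fin n → ℝ) : Prop :=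
  ∀ A' b', memIM Alo Ahi A' → memIV blo bhi b' →
    ∃ A b, memIM Alo Ahi A ∧ memIV blo bhi b ∧
      (∀ i j, qA i j = true → A i j = A' i j) ∧
      (∀ i, qb i = true → b i = b' i) ∧
      ∀ i, rel i (∑ j, A i j * x j) (b i)

/-!
The conditions decouple over rows and, inside a row, over entries. A universally quantified
entry may be chosen adversarially; since `t ↦ t * x j` is linear, the worst choice over
`[lo, hi]` is the endpoint realizing `max (lo * x j) (hi * x j)`. An existentially quantified
entry is ours to choose, and the best choice is the endpoint realizing the `min`. Likewise the
worst universal right-hand side is `blo i`, and the best existential one is `bhi i`. With these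
extremal choices `A x ≤ b` is exactly `U_i(x) ≤ s_i` row by row.
-/

open Set

section Endpoints

variable {α : Type*} [LinearOrder α] {lo hi t : α}

lemma mul_mem_Icc_min_max [Field α] [IsStrictOrderedRing α] (ht : t ∈ Icc lo hi) (c : α) :
    t * c ∈ Icc (min (lo * c) (hi * c)) (max (lo * c) (hi * c)) := by
  rw [Set.Icc_min_max, ← image_mul_const_uIcc]
  exact mem_image_of_mem _ (Icc_subset_uIcc ht)

lemma exists_mem_Icc_mul_eq_max [Mul α] (h : lo ≤ hi) (c : α) :
    ∃ t ∈ Icc lo hi, t * c = max (lo * c) (hi * c) := by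
  rcases max_choice (lo * c) (hi * c) with h' | h'
  · exact ⟨lo, left_mem_Icc.2 h, h'.symm⟩
  · exact ⟨hi, right_mem_Icc.2 h, h'.symm⟩

lemma exists_mem_Icc_mul_eq_min [Mul α] (h : lo ≤ hi) (c : α) :
    ∃ t ∈ Icc lo hi, t * c = min (lo * c) (hi * c) := by
  rcases min_choice (lo * c) (hi * c) with h' | h'
  · exact ⟨lo, left_mem_Icc.2 h, h'.symm⟩
  · exact ⟨hi, right_mem_Icc.2 h, h'.symm⟩

end Endpoints

section Rows

variable {m n : ℕ} {Alo Ahi : Matrix (Fin m) (Fin n) ℝ} {blo bhi : Fin m → ℝ}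
  {qA : Fin m → Fin n → Bool} {qb : Fin m → Bool} {x : Fin n → ℝ}

lemma AESol.forall_row_le (hA : ∀ i j, Alo i j ≤ Ahi i j) (hb : ∀ i, blo i ≤ bhi i)
    (hsol : AESol Alo Ahi blo bhi qA qb (fun _ a b => a ≤ b) x) (i : Fin m) :
    (∑ j, if qA i j then max (Alo i j * x j) (Ahi i j * x j)
        else min (Alo i j * x j) (Ahi i j * x j)) ≤ (if qb i then blo i else bhi i) := by
  choose Aw hAw_mem hAw using fun i j => exists_mem_Icc_mul_eq_max (hA i j) (x j)
  obtain ⟨A, b, hA_mem, hb_mem, hA_fix, hb_fix, hAb⟩ :=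
    hsol Aw blo hAw_mem fun i => ⟨le_rfl, hb i⟩
  calc _ ≤ ∑ j, A i j * x j := sum_le_sum fun j _ => ?_
    _ ≤ b i := hAb i
    _ ≤ _ := ?_
  · cases hq : qA i j
    · exact (mul_mem_Icc_min_max (hA_mem i j) (x j)).1
    · rw [hA_fix i j hq, hAw, if_pos rfl]
  · cases hq : qb i
    · exact (hb_mem i).2
    · rw [hb_fix i hq, if_pos rfl]

lemma aeSol_of_forall_row_le (hA : ∀ i j, Alo i j ≤ Ahi i j) (hb : ∀ i, blo i ≤ bhi i)
    (hU : ∀ i, (∑ j, if qA i j then max (Alo i j * x j) (Ahi i j * x j)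
        else min (Alo i j * x j) (Ahi i j * x j)) ≤ (if qb i then blo i else bhi i)) :
    AESol Alo Ahi blo bhi qA qb (fun _ a b => a ≤ b) x := by
  intro A' b' hA' hb'
  choose Ab hAb_mem hAb using fun i j => exists_mem_Icc_mul_eq_min (hA i j) (x j)
  refine ⟨fun i j => if qA i j then A' i j else Ab i j, fun i => if qb i then b' i else bhi i,
    fun i j => ?_, fun i => ?_, fun i j hq => if_pos hq, fun i hq => if_pos hq, fun i => ?_⟩
  · dsimp only
    cases qA i j
    exacts [hAb_mem i j, hA' i j]
  · dsimp only
    cases qb i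
    exacts [⟨hb i, le_rfl⟩, hb' i]
  calc ∑ j, (if qA i j then A' i j else Ab i j) * x j ≤ _ := sum_le_sum fun j _ => ?_
    _ ≤ _ := hU i
    _ ≤ _ := ?_
  · cases qA i j
    · exact (hAb i j).le
    · exact (mul_mem_Icc_min_max (hA' i j) (x j)).2
  · dsimp only
    cases qb i
    exacts [le_rfl, (hb' i).1]

end Rows

theorem stmt2 (m n : ℕ) (Alo Ahi : Matrix (Fin m) (Fin n) ℝ) (blo bhi : Fin m → ℝ)
    (hA : ∀ i j, Alo i j ≤ Ahi i j) (hb : ∀ i, blo i ≤ bhi i)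
    (qA : Fin m → Fin n → Bool) (qb : Fin m → Bool) (x : Fin n → ℝ) :
    AESol Alo Ahi blo bhi qA qb (fun _ a b => a ≤ b) x ↔
    ∀ i,
      (∑ j, if qA i j then max (Alo i j * x j) (Ahi i j * x j)
              else min (Alo i j * x j) (Ahi i j * x j)) ≤ (if qb i then blo i else bhi i) :=
  ⟨AESol.forall_row_le hA hb, aeSol_of_forall_row_le hA hb⟩
end

section
/- For interval systems of linear inequalities A x ≤ b, the order of the quantifiers does not matter: for every x ∈ ℝ^n, x is an AE-solution of A x ≤ b (universal parameters quantified first) if and only if x is an EA-solution of A x ≤ b (existential parameters quantified first), for the same interval data (Alo, Ahi, blo, bhi) and the same quantifier pattern (𝒜, β). -/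
open Finset

/-- `x` is an EA-solution: the existentially quantified parameters are chosen
first, then for every choice of the universally quantified parameters the
combined matrix/vector must satisfy the relations. -/
def EASol {m n : ℕ} (Alo Ahi : Matrix (Fin m) (Fin n) ℝ) (blo bhi : Fin m → ℝ)
    (qA : Fin m → Fin n → Bool) (qb : Fin m → Bool)
    (rel : Fin m → ℝ → ℝ → Prop) (x : Fin n → ℝ) : Prop :=
  ∃ A b, memIM Alo Ahi A ∧ memIV blo bhi b ∧
    ∀ A' b', memIM Alo Ahi A' → memIV blo bhi b' →
      ∀ i, rel i (∑ j, (if qA i j then A' i j else A i j) * x j)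
               (if qb i then b' i else b i)

/-!
EA ⇒ AE holds for any relations: given the early existential choice `(A, b)`, answer every
universal choice `(A', b')` with the matrix and vector that combine the two.

AE ⇒ EA uses monotonicity of `≤`. Play the worst universal choice first: `b' = blo` and, in
each column, the end of the interval that maximizes `A'ᵢⱼ xⱼ` (`Ahi` where `xⱼ ≥ 0`, `Alo`
elsewhere). The existential answer `(A, b)` to this choice then works against every universal
choice, since it only makes the left-hand sides smaller and the right-hand sides larger.
-/

section IntervalSystems

variable {m n : ℕ} {Alo Ahi : Matrix (Fin m) (Fin n) ℝ} {blo bhi : Fin m → ℝ}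

theorem memIM_ite {A A' : Matrix (Fin m) (Fin n) ℝ} (hA : memIM Alo Ahi A)
    (hA' : memIM Alo Ahi A') (q : Fin m → Fin n → Bool) :
    memIM Alo Ahi (fun i j => if q i j then A' i j else A i j) := by
  intro i j
  dsimp only
  cases q i j
  exacts [hA i j, hA' i j]

theorem memIV_ite {b b' : Fin m → ℝ} (hb : memIV blo bhi b) (hb' : memIV blo bhi b')
    (q : Fin m → Bool) :
    memIV blo bhi (fun i => if q i then b' i else b i) := by
  intro i
  dsimp only
  cases q i
  exacts [hb i, hb' i]

theorem aeSol_of_eaSol {qA : Fin m → Fin n → Bool} {qb : Fin m → Bool}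
    {rel : Fin m → ℝ → ℝ → Prop} {x : Fin n → ℝ}
    (h : EASol Alo Ahi blo bhi qA qb rel x) : AESol Alo Ahi blo bhi qA qb rel x := by
  obtain ⟨A, b, hA, hb, hsol⟩ := h
  intro A' b' hA' hb'
  exact ⟨_, _, memIM_ite hA hA' qA, memIV_ite hb hb' qb, fun _ _ hq => if_pos hq,
    fun _ hq => if_pos hq, hsol A' b' hA' hb'⟩

noncomputable def maxCorner (Alo Ahi : Matrix (Fin m) (Fin n) ℝ) (x : Fin n → ℝ) :
    Matrix (Fin m) (Fin n) ℝ :=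
  fun i j => if 0 ≤ x j then Ahi i j else Alo i j

theorem memIM_maxCorner (hA : ∀ i j, Alo i j ≤ Ahi i j) (x : Fin n → ℝ) :
    memIM Alo Ahi (maxCorner Alo Ahi x) := by
  intro i j
  unfold maxCorner
  split_ifs
  exacts [⟨hA i j, le_rfl⟩, ⟨le_rfl, hA i j⟩]

theorem mul_le_maxCorner_mul {A : Matrix (Fin m) (Fin n) ℝ} (hA : memIM Alo Ahi A)
    (x : Fin n → ℝ) (i : Fin m) (j : Fin n) : A i j * x j ≤ maxCorner Alo Ahi x i j * x j := by
  unfold maxCorner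
  split_ifs with hx
  · exact mul_le_mul_of_nonneg_right (hA i j).2 hx
  · exact mul_le_mul_of_nonpos_right (hA i j).1 (le_of_not_ge hx)

theorem eaSol_of_aeSol_le (hA : ∀ i j, Alo i j ≤ Ahi i j) (hb : ∀ i, blo i ≤ bhi i)
    {qA : Fin m → Fin n → Bool} {qb : Fin m → Bool} {x : Fin n → ℝ}
    (h : AESol Alo Ahi blo bhi qA qb (fun _ a b => a ≤ b) x) :
    EASol Alo Ahi blo bhi qA qb (fun _ a b => a ≤ b) x := by
  obtain ⟨A, b, hAmem, hbmem, hAeq, hbeq, hsol⟩ :=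
    h (maxCorner Alo Ahi x) blo (memIM_maxCorner hA x) fun i => ⟨le_rfl, hb i⟩
  refine ⟨A, b, hAmem, hbmem, fun A' b' hA' hb' i => ?_⟩
  have hlhs : ∑ j, (if qA i j then A' i j else A i j) * x j ≤ ∑ j, A i j * x j := by
    refine sum_le_sum fun j _ => ?_
    cases hq : qA i j
    · exact le_rfl
    · simpa only [hAeq i j hq, if_true] using mul_le_maxCorner_mul hA' x i j
  have hrhs : b i ≤ if qb i then b' i else b i := by
    cases hq : qb i
    · exact le_rfl
    · simpa only [hbeq i hq, if_true] using (hb' i).1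
  exact hlhs.trans ((hsol i).trans hrhs)

end IntervalSystems

theorem stmt4 (m n : ℕ) (Alo Ahi : Matrix (Fin m) (Fin n) ℝ) (blo bhi : Fin m → ℝ)
    (hA : ∀ i j, Alo i j ≤ Ahi i j) (hb : ∀ i, blo i ≤ bhi i)
    (qA : Fin m → Fin n → Bool) (qb : Fin m → Bool) (x : Fin n → ℝ) :
    AESol Alo Ahi blo bhi qA qb (fun _ a b => a ≤ b) x ↔
    EASol Alo Ahi blo bhi qA qb (fun _ a b => a ≤ b) x :=
  ⟨eaSol_of_aeSol_le hA hb, aeSol_of_eaSol⟩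
end

section
/- (Characterization of tolerable solutions of interval inequalities A x ≥ b.) Let (Alo, Ahi) be an interval m×n matrix and (blo, bhi) an interval vector in ℝ^m. For every x ∈ ℝ^n: for every matrix A lying in the interval matrix there exists a vector b lying in the interval vector with Σ_j A_{ij} x_j ≥ b_i for every i, if and only if for every row i, Σ_j min(Alo_{ij} x_j, Ahi_{ij} x_j) ≥ blo_i. -/
open Finset

/-! The smallest value of `a * t` over `a ∈ [lo, hi]` is `min (lo * t) (hi * t)`, attained at
`lo` when `t ≥ 0` and at `hi` otherwise. Hence, row by row, the smallest value of `(A x)_i` over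
the interval matrix is `∑ j, min (Alo i j * x j) (Ahi i j * x j)`, and `A x ≥ b` is tolerable
exactly when this minimum reaches the least admissible right-hand side `blo i`. -/

section Scalar

variable {α : Type*} [Ring α] [LinearOrder α] [IsStrictOrderedRing α]

theorem min_mul_le_mul_of_mem_Icc {lo hi a : α} (ha : a ∈ Set.Icc lo hi) (t : α) :
    min (lo * t) (hi * t) ≤ a * t := by
  rcases le_total 0 t with ht | ht
  · exact (min_le_left _ _).trans (mul_le_mul_of_nonneg_right ha.1 ht)
  · exact (min_le_right _ _).trans (mul_le_mul_of_nonpos_right ha.2 ht)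

theorem ite_nonneg_mul_eq_min {lo hi : α} (h : lo ≤ hi) (t : α) :
    (if 0 ≤ t then lo else hi) * t = min (lo * t) (hi * t) := by
  split_ifs with ht
  · exact (min_eq_left (mul_le_mul_of_nonneg_right h ht)).symm
  · exact (min_eq_right (mul_le_mul_of_nonpos_right h (not_le.mp ht).le)).symm

end Scalar

section IntervalMatrix

variable {m n : ℕ} {Alo Ahi : Matrix (Fin m) (Fin n) ℝ}

theorem memIM.sum_min_le_sum_mul {A : Matrix (Fin m) (Fin n) ℝ} (hA : memIM Alo Ahi A)
    (x : Fin n → ℝ) (i : Fin m) :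
    ∑ j, min (Alo i j * x j) (Ahi i j * x j) ≤ ∑ j, A i j * x j :=
  sum_le_sum fun j _ => min_mul_le_mul_of_mem_Icc (hA i j) (x j)

noncomputable def minimizingMatrix (Alo Ahi : Matrix (Fin m) (Fin n) ℝ) (x : Fin n → ℝ) :
    Matrix (Fin m) (Fin n) ℝ :=
  fun i j => if 0 ≤ x j then Alo i j else Ahi i j

theorem memIM_minimizingMatrix (hA : ∀ i j, Alo i j ≤ Ahi i j) (x : Fin n → ℝ) :
    memIM Alo Ahi (minimizingMatrix Alo Ahi x) := by
  intro i j
  unfold minimizingMatrix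
  split_ifs
  · exact ⟨le_rfl, hA i j⟩
  · exact ⟨hA i j, le_rfl⟩

theorem sum_minimizingMatrix_mul (hA : ∀ i j, Alo i j ≤ Ahi i j) (x : Fin n → ℝ) (i : Fin m) :
    ∑ j, minimizingMatrix Alo Ahi x i j * x j = ∑ j, min (Alo i j * x j) (Ahi i j * x j) :=
  sum_congr rfl fun j _ => ite_nonneg_mul_eq_min (hA i j) (x j)

end IntervalMatrix

theorem stmt19 (m n : ℕ) (Alo Ahi : Matrix (Fin m) (Fin n) ℝ) (blo bhi : Fin m → ℝ)
    (hA : ∀ i j, Alo i j ≤ Ahi i j) (hb : ∀ i, blo i ≤ bhi i)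
    (x : Fin n → ℝ) :
    (∀ A, memIM Alo Ahi A →
      ∃ b, memIV blo bhi b ∧ ∀ i, ∑ j, A i j * x j ≥ b i) ↔
    ∀ i, (∑ j, min (Alo i j * x j) (Ahi i j * x j)) ≥ blo i := by
  constructor
  · intro h i
    obtain ⟨b, hbmem, hAxb⟩ := h _ (memIM_minimizingMatrix hA x)
    calc blo i ≤ b i := (hbmem i).1
      _ ≤ ∑ j, minimizingMatrix Alo Ahi x i j * x j := hAxb i
      _ = ∑ j, min (Alo i j * x j) (Ahi i j * x j) := sum_minimizingMatrix_mul hA x i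
  · intro h A hmem
    exact ⟨blo, fun i => ⟨le_rfl, hb i⟩, fun i => (h i).trans (hmem.sum_min_le_sum_mul x i)⟩
end
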